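/- Let 0 < μ < L, Q = L/μ > 1, α = 1/L, β = (√Q − 1)/(√Q + 1), r = (√Q − 1)/√Q, and B(μ) = [[1 − α(1+β)μ, β²], [−αμ, β]]. Then for every integer k ≥ 1, B(μ)^k = [[(1 + k/(√Q + 1)) r^k, k((√Q − 1)/(√Q + 1))² r^{k−1}], [−(k/Q) r^{k−1}, (1 − k/(√Q + 1)) r^k]]. -/

import Mathlib

/-!
With `s = √Q` and `αμ = 1/s²`, the matrix `B(μ)` has the double eigenvalue `r = (s - 1)/s`:
it is `r • 1 + N` with `N² = 0`, so the binomial expansion of `(r • 1 + N)ᵏ` stops after the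
linear term and `B(μ)ᵏ = rᵏ • 1 + k rᵏ⁻¹ • N`.
-/

open Matrix

/-- The 2×2 matrix `B(λ)` from the analysis of Nesterov's method. -/
noncomputable def Bmat (α β lam : ℝ) : Matrix (Fin 2) (Fin 2) ℝ :=
  !![1 - α * (1 + β) * lam, β ^ 2; -(α * lam), β]

theorem smul_one_add_pow_succ_of_sq_eq_zero {R A : Type*} [CommSemiring R] [Semiring A]
    [Algebra R A] (r : R) {N : A} (hN : N ^ 2 = 0) (k : ℕ) :
    (r • 1 + N) ^ (k + 1) = r ^ (k + 1) • 1 + ((k + 1 : R) * r ^ k) • N := by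
  induction k with
  | zero => simp
  | succ k ih =>
    rw [pow_succ, ih]
    simp only [add_mul, mul_add, smul_mul_assoc, mul_smul_comm, one_mul, mul_one, ← sq, hN,
      smul_zero, add_zero]
    push_cast
    module

noncomputable def BmatNilpotentPart (s : ℝ) : Matrix (Fin 2) (Fin 2) ℝ :=
  !![(s - 1) / s / (s + 1), ((s - 1) / (s + 1)) ^ 2; -(1 / s ^ 2), -((s - 1) / s / (s + 1))]

theorem BmatNilpotentPart_sq (s : ℝ) : BmatNilpotentPart s ^ 2 = 0 := by
  ext i j
  fin_cases i <;> fin_cases j <;> simp [BmatNilpotentPart, sq, Matrix.mul_apply] <;> ring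

theorem Bmat_eq_smul_one_add_nilpotentPart {α β μ s : ℝ} (hs : 0 < s)
    (hαμ : α * μ = 1 / s ^ 2) (hβ : β = (s - 1) / (s + 1)) :
    Bmat α β μ = ((s - 1) / s) • 1 + BmatNilpotentPart s := by
  have hαβμ : α * (1 + β) * μ = (1 + β) / s ^ 2 := by rw [mul_right_comm, hαμ]; ring
  subst hβ
  ext i j
  fin_cases i <;> fin_cases j <;>
    simp [Bmat, BmatNilpotentPart, hαβμ, hαμ] <;> field_simp <;> ring

theorem Bmat_pow {α β μ s : ℝ} (hs : 0 < s) (hαμ : α * μ = 1 / s ^ 2)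
    (hβ : β = (s - 1) / (s + 1)) (k : ℕ) (hk : 1 ≤ k) :
    Bmat α β μ ^ k =
      !![(1 + (k : ℝ) / (s + 1)) * ((s - 1) / s) ^ k,
           (k : ℝ) * ((s - 1) / (s + 1)) ^ 2 * ((s - 1) / s) ^ (k - 1);
         -((k : ℝ) / s ^ 2) * ((s - 1) / s) ^ (k - 1),
           (1 - (k : ℝ) / (s + 1)) * ((s - 1) / s) ^ k] := by
  obtain ⟨n, rfl⟩ := Nat.exists_eq_add_of_le' hk
  rw [Bmat_eq_smul_one_add_nilpotentPart hs hαμ hβ,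
    smul_one_add_pow_succ_of_sq_eq_zero _ (BmatNilpotentPart_sq s)]
  ext i j
  fin_cases i <;> fin_cases j <;>
    simp [BmatNilpotentPart, pow_succ, ← sub_eq_add_neg] <;> field_simp

theorem stmt17 (μ L : ℝ) (hμ : 0 < μ) (hμL : μ < L)
    (Q : ℝ) (hQ : Q = L / μ) (hQ1 : 1 < Q)
    (α β r : ℝ) (hα : α = 1 / L) (hβ : β = (Real.sqrt Q - 1) / (Real.sqrt Q + 1))
    (hr : r = (Real.sqrt Q - 1) / Real.sqrt Q) :
    ∀ k : ℕ, 1 ≤ k →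
      (Bmat α β μ) ^ k =
        !![(1 + (k : ℝ) / (Real.sqrt Q + 1)) * r ^ k,
             (k : ℝ) * ((Real.sqrt Q - 1) / (Real.sqrt Q + 1)) ^ 2 * r ^ (k - 1);
           -((k : ℝ) / Q) * r ^ (k - 1),
             (1 - (k : ℝ) / (Real.sqrt Q + 1)) * r ^ k] := by
  intro k hk
  have hQ0 : 0 ≤ Q := by linarith
  have hαμ : α * μ = 1 / Real.sqrt Q ^ 2 := by
    rw [Real.sq_sqrt hQ0, hα, hQ]
    field_simp [(hμ.trans hμL).ne']
  have h := Bmat_pow (Real.sqrt_pos.2 (by linarith)) hαμ hβ k hk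
  rwa [Real.sq_sqrt hQ0, ← hr] at h
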